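/- Let q be a prime and suppose the set PR(q) = {p prime : q mod p generates the unit group (ℤ/pℤ)ˣ} is infinite. Let BS(1,q) be the Baumslag–Solitar group with presentation ⟨a, b | bab⁻¹ = a^q⟩. Then for every element g ≠ 1 of BS(1,q), there exist a prime p ∈ PR(q) and a group homomorphism φ : BS(1,q) → G_p such that φ(g) ≠ 1; equivalently, the homomorphism from BS(1,q) into the direct product ∏_{p ∈ PR(q)} G_p induced by the canonical quotient maps is injective. -/

import Mathlib

/-- The holomorph-type action: a unit `u` of `ZMod p` acts on the additive group `ZMod p`
(viewed multiplicatively) by multiplication by `u`. -/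
def holAction (p : ℕ) : (ZMod p)ˣ →* MulAut (Multiplicative (ZMod p)) where
  toFun u := AddEquiv.toMultiplicative (AddAut.mulLeft u)
  map_one' := by ext x; simp [AddEquiv.toMultiplicative, AddAut.mulLeft]
  map_mul' u v := by ext x; simp [AddEquiv.toMultiplicative, AddAut.mulLeft, mul_smul]

/-- `G_p = (ℤ/pℤ) ⋊ (ℤ/pℤ)ˣ`, the holomorph of the cyclic group of order `p`, with units
acting by multiplication. -/
def Holo (p : ℕ) : Type :=
  SemidirectProduct (Multiplicative (ZMod p)) (ZMod p)ˣ (holAction p)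

instance (p : ℕ) : Group (Holo p) :=
  inferInstanceAs (Group (SemidirectProduct _ _ _))

/-- The single defining relation `b * a * b⁻¹ * (a^q)⁻¹` of the Baumslag–Solitar group
`BS(1,q) = ⟨a, b ∣ b a b⁻¹ = a^q⟩`, where `a = FreeGroup.of 0` and `b = FreeGroup.of 1`. -/
def bsRel (q : ℕ) : Set (FreeGroup (Fin 2)) :=
  {FreeGroup.of 1 * FreeGroup.of 0 * (FreeGroup.of 1)⁻¹ * (FreeGroup.of 0 ^ q)⁻¹}

/-- The Baumslag–Solitar group `BS(1,q)` as a presented group. -/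
def BS (q : ℕ) : Type :=
  PresentedGroup (bsRel q)

instance (q : ℕ) : Group (BS q) :=
  inferInstanceAs (Group (PresentedGroup _))

/-- `PR q` is the set of primes `p` such that `q` mod `p` generates `(ℤ/pℤ)ˣ`. -/
def PR (q : ℕ) : Set ℕ :=
  {p | p.Prime ∧ ∃ u : (ZMod p)ˣ, (u : ZMod p) = (q : ZMod p) ∧
    ∀ v : (ZMod p)ˣ, v ∈ Subgroup.zpowers u}


/-!
Conjugation by `b` multiplies exponents of `a` by `q`, so every element of `BS(1,q)` is a word
`b⁻ⁱ aⁿ bʲ` with `i j : ℕ`. Under `a ↦ (1, 1)`, `b ↦ (0, u)` with `u = q mod p`, this word goes to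
`(0, u⁻ⁱ)(n, 1)(0, uʲ)`, which is trivial iff `p ∣ n` and `uⁱ = uʲ`. When `u` generates
`(ℤ/pℤ)ˣ` it has order `p - 1`, so for `p ∈ PR(q)` larger than `|n| + i + j + 1` this forces
`n = 0` and `i = j`.
-/

open SemidirectProduct Multiplicative

section ConjEqPow

variable {G : Type*} [Group G] {a b : G} {q : ℕ}

theorem pow_mul_zpow_mul_pow_inv_of_conj_eq_pow (h : b * a * b⁻¹ = a ^ q) (k : ℕ) (m : ℤ) :
    b ^ k * a ^ m * (b ^ k)⁻¹ = a ^ ((q : ℤ) ^ k * m) := by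
  have hk : b ^ k * a * (b ^ k)⁻¹ = a ^ (q ^ k) := by
    induction k with
    | zero => simp
    | succ k ih =>
      calc b ^ (k + 1) * a * (b ^ (k + 1))⁻¹ = b * (b ^ k * a * (b ^ k)⁻¹) * b⁻¹ := by group
        _ = a ^ q ^ (k + 1) := by rw [ih, ← conj_pow, h, ← pow_mul, pow_succ']
  rw [← conj_zpow, hk, ← zpow_natCast, ← zpow_mul]
  push_cast
  rfl

theorem pow_mul_zpow_of_conj_eq_pow (h : b * a * b⁻¹ = a ^ q) (k : ℕ) (m : ℤ) :
    b ^ k * a ^ m = a ^ ((q : ℤ) ^ k * m) * b ^ k := by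
  rw [← pow_mul_zpow_mul_pow_inv_of_conj_eq_pow h, inv_mul_cancel_right]

theorem zpow_mul_pow_inv_of_conj_eq_pow (h : b * a * b⁻¹ = a ^ q) (k : ℕ) (m : ℤ) :
    a ^ m * (b ^ k)⁻¹ = (b ^ k)⁻¹ * a ^ ((q : ℤ) ^ k * m) := by
  rw [← pow_mul_zpow_mul_pow_inv_of_conj_eq_pow h]
  group

end ConjEqPow

namespace BS

variable {q : ℕ}

def a (q : ℕ) : BS q := PresentedGroup.of 0

def b (q : ℕ) : BS q := PresentedGroup.of 1

theorem b_mul_a_mul_b_inv : b q * a q * (b q)⁻¹ = a q ^ q := by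
  have h : PresentedGroup.mk (bsRel q)
      (FreeGroup.of 1 * FreeGroup.of 0 * (FreeGroup.of 1)⁻¹ * (FreeGroup.of 0 ^ q)⁻¹) = 1 :=
    (QuotientGroup.eq_one_iff _).2 (Subgroup.subset_normalClosure rfl)
  rw [map_mul, map_inv, map_pow, mul_inv_eq_one] at h
  exact h

def lift {G : Type*} [Group G] (x y : G) (h : y * x * y⁻¹ = x ^ q) : BS q →* G :=
  PresentedGroup.toGroup (f := ![x, y]) <| by
    rintro r rfl
    simpa [mul_inv_eq_one] using h

section Lift

variable {G : Type*} [Group G] {x y : G} (h : y * x * y⁻¹ = x ^ q)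
include h

@[simp] theorem lift_a : lift x y h (a q) = x := PresentedGroup.toGroup.of _

@[simp] theorem lift_b : lift x y h (b q) = y := PresentedGroup.toGroup.of _

end Lift

theorem closure_a_b : Subgroup.closure {a q, b q} = ⊤ := by
  refine eq_top_iff.2 fun g _ => ?_
  have hg : (g : PresentedGroup (bsRel q)) ∈ Subgroup.closure (Set.range PresentedGroup.of) := by
    rw [PresentedGroup.closure_range_of]; trivial
  refine Subgroup.closure_mono ?_ hg
  rintro _ ⟨s, rfl⟩
  fin_cases s
  exacts [Or.inl rfl, Or.inr rfl]

theorem exists_eq_inv_pow_mul_zpow_mul_pow (g : BS q) :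
    ∃ i j : ℕ, ∃ n : ℤ, g = (b q ^ i)⁻¹ * a q ^ n * b q ^ j := by
  have hg : g ∈ Subgroup.closure {a q, b q} := by
    rw [closure_a_b]; trivial
  have hrel := b_mul_a_mul_b_inv (q := q)
  induction hg using Subgroup.closure_induction_left with
  | one => exact ⟨0, 0, 0, by simp⟩
  | mul_left x hx y _ ih =>
    obtain ⟨i, j, n, rfl⟩ := ih
    rcases hx with rfl | rfl
    · refine ⟨i, j, (q : ℤ) ^ i + n, ?_⟩
      have := zpow_mul_pow_inv_of_conj_eq_pow hrel i 1
      rw [zpow_one, mul_one] at this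
      calc a q * ((b q ^ i)⁻¹ * a q ^ n * b q ^ j)
          = a q * (b q ^ i)⁻¹ * a q ^ n * b q ^ j := by group
        _ = _ := by rw [this, zpow_add]; group
    · refine ⟨i, j + 1, q * n, ?_⟩
      have := pow_mul_zpow_of_conj_eq_pow hrel 1 n
      rw [pow_one, pow_one] at this
      calc b q * ((b q ^ i)⁻¹ * a q ^ n * b q ^ j)
          = (b q ^ i)⁻¹ * (b q * a q ^ n) * b q ^ j := by group
        _ = _ := by rw [this]; group
  | inv_mul_cancel x hx y _ ih =>
    obtain ⟨i, j, n, rfl⟩ := ih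
    rcases hx with rfl | rfl
    · refine ⟨i, j, -(q : ℤ) ^ i + n, ?_⟩
      have := zpow_mul_pow_inv_of_conj_eq_pow hrel i (-1)
      rw [zpow_neg_one, mul_neg_one] at this
      calc (a q)⁻¹ * ((b q ^ i)⁻¹ * a q ^ n * b q ^ j)
          = (a q)⁻¹ * (b q ^ i)⁻¹ * a q ^ n * b q ^ j := by group
        _ = _ := by rw [this, zpow_add]; group
    · exact ⟨i + 1, j, n, by group⟩

end BS

section Holomorph

variable {N H : Type*} [Group N] [Group H] {φ : H →* MulAut N}

theorem SemidirectProduct.inr_mul_inl_mul_inr_eq_one_iff (g h : H) (n : N) :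
    (inr g * inl n * inr h : N ⋊[φ] H) = 1 ↔ n = 1 ∧ g * h = 1 := by
  simp [SemidirectProduct.ext_iff]

end Holomorph

theorem holAction_apply {p : ℕ} (u : (ZMod p)ˣ) (x : Multiplicative (ZMod p)) :
    holAction p u x = ofAdd ((u : ZMod p) * x.toAdd) := rfl

namespace BS

variable {q p : ℕ}

def toHolo (u : (ZMod p)ˣ) (hu : (u : ZMod p) = q) :
    BS q →* Multiplicative (ZMod p) ⋊[holAction p] (ZMod p)ˣ :=
  lift (inl (ofAdd 1)) (inr u) <| by
    rw [← map_inv, ← inl_aut, holAction_apply, ← map_pow, ← ofAdd_nsmul, hu]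
    simp

theorem toHolo_inv_pow_mul_zpow_mul_pow (u : (ZMod p)ˣ) (hu : (u : ZMod p) = q)
    (i j : ℕ) (n : ℤ) :
    toHolo u hu ((b q ^ i)⁻¹ * a q ^ n * b q ^ j) =
      inr (u ^ i)⁻¹ * inl (ofAdd (n : ZMod p)) * inr (u ^ j) := by
  rw [toHolo, map_mul, map_mul, map_inv, map_pow, map_pow, map_zpow, lift_a, lift_b, ← map_pow,
    ← map_pow, ← map_inv, ← map_zpow, ← ofAdd_zsmul, zsmul_one]

theorem toHolo_inv_pow_mul_zpow_mul_pow_eq_one_iff (u : (ZMod p)ˣ) (hu : (u : ZMod p) = q)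
    (i j : ℕ) (n : ℤ) :
    toHolo u hu ((b q ^ i)⁻¹ * a q ^ n * b q ^ j) = 1 ↔ (n : ZMod p) = 0 ∧ u ^ i = u ^ j := by
  rw [toHolo_inv_pow_mul_zpow_mul_pow, inr_mul_inl_mul_inr_eq_one_iff, inv_mul_eq_one,
    ofAdd_eq_one]

end BS

theorem orderOf_eq_sub_one_of_forall_mem_zpowers {p : ℕ} [Fact p.Prime] {u : (ZMod p)ˣ}
    (hu : ∀ v, v ∈ Subgroup.zpowers u) : orderOf u = p - 1 := by
  rw [orderOf_eq_card_of_forall_mem_zpowers hu, Nat.card_eq_fintype_card, ZMod.card_units]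

theorem stmt_15_general (q : ℕ) (hinf : (PR q).Infinite)
    (g : BS q) (hg : g ≠ 1) :
    ∃ p ∈ PR q, ∃ φ : BS q →* Holo p, φ g ≠ 1 := by
  obtain ⟨i, j, n, rfl⟩ := BS.exists_eq_inv_pow_mul_zpow_mul_pow g
  obtain ⟨p, hpPR, hp_gt⟩ := hinf.exists_gt (n.natAbs + i + j + 1)
  obtain ⟨hp, u, hu, hgen⟩ := hpPR
  have := Fact.mk hp
  refine ⟨p, ⟨hp, u, hu, hgen⟩, BS.toHolo u hu, fun h => hg ?_⟩
  obtain ⟨hn, hpow⟩ := (BS.toHolo_inv_pow_mul_zpow_mul_pow_eq_one_iff u hu i j n).1 h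
  have horder := orderOf_eq_sub_one_of_forall_mem_zpowers hgen
  have hn0 : n = 0 := Int.eq_zero_of_dvd_of_natAbs_lt_natAbs
    ((ZMod.intCast_zmod_eq_zero_iff_dvd n p).1 hn) (by simp only [Int.natAbs_natCast]; omega)
  have hij : i = j := pow_injOn_Iio_orderOf (by simp only [Set.mem_Iio]; omega)
    (by simp only [Set.mem_Iio]; omega) hpow
  simp [hn0, hij]

/-- If `q` is a prime for which the set `PR(q)` of primes admitting `q` as a primitive root is
infinite, then `BS(1,q)` is residually in the family `{G_p : p ∈ PR(q)}`: every `g ≠ 1` is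
detected by a homomorphism `BS(1,q) → G_p` for some `p ∈ PR(q)`. -/
theorem stmt_15 (q : ℕ) (hq : q.Prime) (hinf : (PR q).Infinite)
    (g : BS q) (hg : g ≠ 1) :
    ∃ p ∈ PR q, ∃ φ : BS q →* Holo p, φ g ≠ 1 :=
  stmt_15_general q hinf g hg
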